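/- Let F(x,ξ) be the multi-product newsvendor cost with parameters satisfying v > g, b ≥ 0, b ≥ v−g componentwise. For any x, the function ξ ↦ F(x,ξ) is Lipschitz on ℝ₊^d with constant ‖b‖₂ with respect to the ℓ₂-norm; consequently, by Kantorovich–Rubinstein duality, the supremum of 𝔼_ℚ[F(x,ξ)] over all ℚ with W₁(ℚ, 𝔓̂ₙ) ≤ ε (ℓ₂ ground cost) equals (1/n)∑ⱼ F(x,ξ̂ⱼ) + ε‖b‖₂, so the 1-Wasserstein DRO problem has the same minimizers in x as the SAA problem. -/

import Mathlib

open MeasureTheory ENNReal Finset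

/-- Optimal transport cost between two measures (1-Wasserstein when the cost is a metric). -/
noncomputable def Wcost {E : Type*} [MeasurableSpace E] (c : E → E → ℝ)
    (μ ν : Measure E) : ℝ≥0∞ :=
  ⨅ (π : Measure (E × E)) (_ : π.map Prod.fst = μ) (_ : π.map Prod.snd = ν),
    ∫⁻ z, ENNReal.ofReal (c z.1 z.2) ∂π

/-- The empirical measure of a finite sample. -/
noncomputable def empMeasure {E : Type*} [MeasurableSpace E] {n : ℕ}
    (ξ : Fin n → E) : Measure E :=
  ((n : ℝ≥0∞))⁻¹ • ∑ i, Measure.dirac (ξ i)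

/-- Euclidean norm of a vector in `ℝᵈ`. -/
noncomputable def enorm2 {d : ℕ} (φ : Fin d → ℝ) : ℝ := Real.sqrt (∑ i, (φ i) ^ 2)

/-- The 1-Wasserstein DRO objective for the newsvendor problem: worst-case expected cost
over measures supported on `ℝ₊ᵈ` in the `W₁`-ball of radius `ε` around the empirical
measure (Euclidean ground cost). -/
noncomputable def droObj {d n : ℕ} (F : (Fin d → ℝ) → (Fin d → ℝ) → ℝ)
    (ξhat : Fin n → (Fin d → ℝ)) (ε : ℝ) (x : Fin d → ℝ) : ℝ :=
  sSup {r : ℝ | ∃ Q : Measure (Fin d → ℝ), IsProbabilityMeasure Q ∧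
    Q {ξ | ∀ i, 0 ≤ ξ i}ᶜ = 0 ∧
    Wcost (fun a b => enorm2 (fun i => a i - b i)) Q (empMeasure ξhat) ≤ ENNReal.ofReal ε ∧
    r = ∫ ξ, F x ξ ∂Q}

/-! For fixed `x`, the cost `ξ ↦ F(x, ξ)` is separable, with coordinate slopes `g i - v i` below
`x i` and `b i` above it, hence `‖b‖₂`-Lipschitz. Integrating the Lipschitz bound against a
near-optimal coupling shows that a measure within `W₁`-distance `ε` of the sample raises the
expected cost by at most `ε‖b‖₂`. Conversely, move the fraction `ε / T` of the empirical mass by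
the vector of length `T` in the direction of `b`: this keeps the support in `ℝ₊ᵈ`, costs `ε`, and
raises the expected cost by `ε‖b‖₂` minus `ε / T` times the sample average of the kink-crossing
loss `∑ i, (v i - g i + b i) (x i - ξ i)⁺`; letting `T → ∞` shows that `ε‖b‖₂` is the supremum. -/

open Filter Topology

section Transport

variable {E : Type*} [MeasurableSpace E] {c : E → E → ℝ} {μ ν : Measure E}

theorem Wcost_le_of_map_fst_of_map_snd {π : Measure (E × E)} (h₁ : π.map Prod.fst = μ)
    (h₂ : π.map Prod.snd = ν) : Wcost c μ ν ≤ ∫⁻ z, ENNReal.ofReal (c z.1 z.2) ∂π :=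
  iInf₂_le_of_le π h₁ (iInf_le _ h₂)

theorem integral_le_integral_add_mul_of_map_fst_of_map_snd {f : E → ℝ} {K : ℝ}
    (hc : Measurable (Function.uncurry c)) (hc₀ : ∀ a b, 0 ≤ c a b) (hf : Measurable f)
    (hfν : Integrable f ν) (hlip : ∀ a b, |f a - f b| ≤ K * c a b) {π : Measure (E × E)}
    (h₁ : π.map Prod.fst = μ) (h₂ : π.map Prod.snd = ν)
    (hπ : ∫⁻ z, ENNReal.ofReal (c z.1 z.2) ∂π ≠ ∞) :
    ∫ a, f a ∂μ ≤ ∫ a, f a ∂ν + K * (∫⁻ z, ENNReal.ofReal (c z.1 z.2) ∂π).toReal := by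
  subst h₁ h₂
  have hcost : Integrable (fun z => c z.1 z.2) π :=
    ⟨hc.aestronglyMeasurable, by
      simpa [HasFiniteIntegral, Real.enorm_eq_ofReal (hc₀ _ _)] using hπ.lt_top⟩
  have hsnd : Integrable (fun z => f z.2) π :=
    (integrable_map_measure hf.aestronglyMeasurable measurable_snd.aemeasurable).1 hfν
  have hdiff : Integrable (fun z => f z.1 - f z.2) π :=
    (hcost.const_mul K).mono' (by fun_prop) (ae_of_all _ fun z => hlip z.1 z.2)
  rw [integral_map measurable_fst.aemeasurable hf.aestronglyMeasurable,
    integral_map measurable_snd.aemeasurable hf.aestronglyMeasurable,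
    ← integral_eq_lintegral_of_nonneg_ae (ae_of_all _ fun z => hc₀ _ _)
      hc.aestronglyMeasurable, ← integral_const_mul]
  calc ∫ z, f z.1 ∂π = ∫ z, (f z.2 + (f z.1 - f z.2)) ∂π := by simp only [add_sub_cancel]
    _ = ∫ z, f z.2 ∂π + ∫ z, (f z.1 - f z.2) ∂π := integral_add hsnd hdiff
    _ ≤ ∫ z, f z.2 ∂π + ∫ z, K * c z.1 z.2 ∂π := add_le_add_right
      (integral_mono hdiff (hcost.const_mul K) fun z => (le_abs_self _).trans (hlip _ _)) _

theorem integral_le_integral_add_mul_of_Wcost_le {f : E → ℝ} {K ε : ℝ} (hK : 0 ≤ K)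
    (hε : 0 ≤ ε) (hc : Measurable (Function.uncurry c)) (hc₀ : ∀ a b, 0 ≤ c a b)
    (hf : Measurable f) (hfν : Integrable f ν) (hlip : ∀ a b, |f a - f b| ≤ K * c a b)
    (hW : Wcost c μ ν ≤ ENNReal.ofReal ε) :
    ∫ a, f a ∂μ ≤ ∫ a, f a ∂ν + K * ε := by
  have hlim : Tendsto (fun t => ∫ a, f a ∂ν + K * t) (𝓝[>] ε) (𝓝 (∫ a, f a ∂ν + K * ε)) :=
    ((continuous_const.add (continuous_const.mul continuous_id)).tendsto ε).mono_left
      nhdsWithin_le_nhds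
  refine ge_of_tendsto hlim (eventually_nhdsWithin_of_forall fun t (ht : ε < t) => ?_)
  have hWt : Wcost c μ ν < ENNReal.ofReal t :=
    hW.trans_lt ((ENNReal.ofReal_lt_ofReal_iff (hε.trans_lt ht)).2 ht)
  obtain ⟨π, hπ⟩ := iInf_lt_iff.1 hWt
  obtain ⟨h₁, hπ⟩ := iInf_lt_iff.1 hπ
  obtain ⟨h₂, hπ⟩ := iInf_lt_iff.1 hπ
  calc ∫ a, f a ∂μ
      ≤ ∫ a, f a ∂ν + K * (∫⁻ z, ENNReal.ofReal (c z.1 z.2) ∂π).toReal :=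
        integral_le_integral_add_mul_of_map_fst_of_map_snd hc hc₀ hf hfν hlip h₁ h₂
          (hπ.trans ENNReal.ofReal_lt_top).ne
    _ ≤ ∫ a, f a ∂ν + K * t := by
      gcongr
      exact (ENNReal.toReal_lt_of_lt_ofReal hπ).le

theorem Wcost_add_smul_map_le {p q : ℝ≥0∞} (hpq : p + q = 1)
    (hc : Measurable (Function.uncurry c)) (hc_self : ∀ a, c a a = 0) {s : E → E}
    (hs : Measurable s) :
    Wcost c (p • μ + q • μ.map s) μ ≤ q * ∫⁻ a, ENNReal.ofReal (c (s a) a) ∂μ := by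
  have hdiag : Measurable fun a : E => (a, a) := measurable_id.prodMk measurable_id
  have hgraph : Measurable fun a : E => (s a, a) := hs.prodMk measurable_id
  refine (Wcost_le_of_map_fst_of_map_snd (π := p • μ.map (fun a => (a, a)) +
    q • μ.map (fun a => (s a, a))) ?_ ?_).trans_eq ?_
  · rw [Measure.map_add _ _ measurable_fst, Measure.map_smul, Measure.map_smul,
      Measure.map_map measurable_fst hdiag, Measure.map_map measurable_fst hgraph]
    simp only [Function.comp_def, Measure.map_id']
  · rw [Measure.map_add _ _ measurable_snd, Measure.map_smul, Measure.map_smul,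
      Measure.map_map measurable_snd hdiag, Measure.map_map measurable_snd hgraph]
    simp only [Function.comp_def, Measure.map_id', ← add_smul, hpq, one_smul]
  · have hcost : Measurable fun z : E × E => ENNReal.ofReal (c z.1 z.2) := hc.ennreal_ofReal
    rw [lintegral_add_measure, lintegral_smul_measure, lintegral_smul_measure,
      lintegral_map hcost hdiag, lintegral_map hcost hgraph]
    simp [hc_self]

theorem integral_ofReal_smul_add_ofReal_smul {f : E → ℝ} (hμ : Integrable f μ)
    (hν : Integrable f ν) {a b : ℝ} (ha : 0 ≤ a) (hb : 0 ≤ b) :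
    ∫ x, f x ∂(ENNReal.ofReal a • μ + ENNReal.ofReal b • ν) =
      a * ∫ x, f x ∂μ + b * ∫ x, f x ∂ν := by
  rw [integral_add_measure (hμ.smul_measure ENNReal.ofReal_ne_top)
    (hν.smul_measure ENNReal.ofReal_ne_top), integral_smul_measure, integral_smul_measure,
    ENNReal.toReal_ofReal ha, ENNReal.toReal_ofReal hb, smul_eq_mul, smul_eq_mul]

end Transport

section Empirical

variable {E : Type*} [MeasurableSpace E] {n : ℕ} (ξ : Fin n → E)

theorem isProbabilityMeasure_empMeasure (hn : 0 < n) : IsProbabilityMeasure (empMeasure ξ) :=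
  ⟨by simp [empMeasure, ENNReal.inv_mul_cancel (Nat.cast_ne_zero.2 hn.ne')]⟩

theorem empMeasure_compl_eq_zero {S : Set E} (hS : MeasurableSet S) (h : ∀ j, ξ j ∈ S) :
    empMeasure ξ Sᶜ = 0 := by
  simp [empMeasure, Measure.dirac_apply' _ hS.compl, h]

theorem map_empMeasure {E' : Type*} [MeasurableSpace E'] {s : E → E'} (hs : Measurable s) :
    (empMeasure ξ).map s = empMeasure (s ∘ ξ) := by
  simp [empMeasure, Measure.map_smul, Measure.map_finset_sum hs.aemeasurable,
    Measure.map_dirac' hs]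

variable [MeasurableSingletonClass E]

theorem integrable_empMeasure (f : E → ℝ) : Integrable f (empMeasure ξ) := by
  obtain rfl | hn := eq_or_ne n 0
  · simp [empMeasure]
  · exact (integrable_finsetSum_measure.2 fun _ _ =>
      integrable_dirac ENNReal.coe_lt_top).smul_measure (by simpa using hn)

theorem integral_empMeasure (f : E → ℝ) : ∫ a, f a ∂empMeasure ξ = (∑ j, f (ξ j)) / n := by
  rw [empMeasure, integral_smul_measure, integral_finsetSum_measure fun _ _ =>
    integrable_dirac ENNReal.coe_lt_top]
  simp [integral_dirac, div_eq_inv_mul]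

end Empirical

section Euclidean

variable {d : ℕ}

theorem continuous_enorm2 : Continuous (enorm2 (d := d)) := by
  unfold enorm2
  fun_prop

theorem continuous_enorm2_sub :
    Continuous (Function.uncurry fun a b : Fin d → ℝ => enorm2 fun i => a i - b i) :=
  continuous_enorm2.comp (by fun_prop)

theorem enorm2_nonneg (φ : Fin d → ℝ) : 0 ≤ enorm2 φ :=
  Real.sqrt_nonneg _

theorem enorm2_sq (φ : Fin d → ℝ) : enorm2 φ ^ 2 = ∑ i, φ i ^ 2 :=
  Real.sq_sqrt (sum_nonneg fun i _ => sq_nonneg (φ i))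

theorem enorm2_smul (r : ℝ) (φ : Fin d → ℝ) : enorm2 (r • φ) = |r| * enorm2 φ := by
  simp only [enorm2, Pi.smul_apply, smul_eq_mul, mul_pow, ← mul_sum,
    Real.sqrt_mul (sq_nonneg r), Real.sqrt_sq_eq_abs]

theorem sum_mul_div_enorm2_smul_self (b : Fin d → ℝ) (T : ℝ) :
    ∑ i, b i * ((T / enorm2 b) • b) i = T * enorm2 b := by
  rcases eq_or_ne (enorm2 b) 0 with hb | hb
  · simp [hb]
  · simp only [Pi.smul_apply, smul_eq_mul, mul_left_comm _ (T / enorm2 b), ← mul_sum, ← sq,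
      ← enorm2_sq]
    field_simp

theorem enorm2_div_enorm2_smul_self_le (b : Fin d → ℝ) {T : ℝ} (hT : 0 ≤ T) :
    enorm2 ((T / enorm2 b) • b) ≤ T := by
  rcases eq_or_ne (enorm2 b) 0 with hb | hb
  · rwa [enorm2_smul, hb, mul_zero]
  · rw [enorm2_smul, abs_div, abs_of_nonneg hT, abs_of_nonneg (enorm2_nonneg b),
      div_mul_cancel₀ T hb]

theorem Wcost_smul_add_smul_map_add_le (P : Measure (Fin d → ℝ)) [IsProbabilityMeasure P]
    {δ : ℝ} (hδ₀ : 0 ≤ δ) (hδ₁ : δ ≤ 1) (h : Fin d → ℝ) :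
    Wcost (fun a b => enorm2 (fun i => a i - b i))
        (ENNReal.ofReal (1 - δ) • P + ENNReal.ofReal δ • P.map (· + h)) P ≤
      ENNReal.ofReal (δ * enorm2 h) := by
  refine (Wcost_add_smul_map_le ?_ continuous_enorm2_sub.measurable (fun a => by simp [enorm2])
    (measurable_add_const h)).trans_eq ?_
  · rw [← ENNReal.ofReal_add (by linarith) hδ₀, sub_add_cancel, ENNReal.ofReal_one]
  · simp [ENNReal.ofReal_mul hδ₀]

end Euclidean

theorem abs_mul_add_mul_min_sub_le {v g b x s t : ℝ} (h : |v - g| ≤ b) :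
    |(b * s + (g - v - b) * min x s) - (b * t + (g - v - b) * min x t)| ≤ b * |s - t| := by
  rw [abs_le] at h
  rw [abs_le]
  rcases le_total x s with hs | hs <;> rcases le_total x t with ht | ht <;>
    rcases le_total s t with hst | hst <;>
    simp only [min_eq_left, min_eq_right, hs, ht, abs_of_nonneg, abs_of_nonpos,
      sub_nonneg.2, sub_nonpos.2, hst] <;>
    constructor <;> nlinarith

theorem min_add_sub_min_le (x s h : ℝ) : min x (s + h) - min x s ≤ max (x - s) 0 := by
  rcases le_total x s with hs | hs
  · simp [min_eq_left hs]
  · simp [min_eq_right hs]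

def newsvendorCost {d : ℕ} (c v g b x ξ : Fin d → ℝ) : ℝ :=
  (∑ i, (c i - g i) * x i) + (∑ i, b i * ξ i) + ∑ i, (g i - v i - b i) * min (x i) (ξ i)

section Newsvendor

variable {d n : ℕ} {c v g b : Fin d → ℝ} {ξhat : Fin n → Fin d → ℝ}

theorem continuous_newsvendorCost (x : Fin d → ℝ) : Continuous (newsvendorCost c v g b x) := by
  unfold newsvendorCost
  fun_prop

theorem abs_newsvendorCost_sub_le (hvgb : ∀ i, |v i - g i| ≤ b i) (x ξ₁ ξ₂ : Fin d → ℝ) :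
    |newsvendorCost c v g b x ξ₁ - newsvendorCost c v g b x ξ₂| ≤
      enorm2 b * enorm2 (fun i => ξ₁ i - ξ₂ i) := by
  have hsplit : newsvendorCost c v g b x ξ₁ - newsvendorCost c v g b x ξ₂ =
      ∑ i, ((b i * ξ₁ i + (g i - v i - b i) * min (x i) (ξ₁ i)) -
        (b i * ξ₂ i + (g i - v i - b i) * min (x i) (ξ₂ i))) := by
    simp only [newsvendorCost, sum_sub_distrib, sum_add_distrib]
    ring
  calc _ ≤ ∑ i, |(b i * ξ₁ i + (g i - v i - b i) * min (x i) (ξ₁ i)) -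
        (b i * ξ₂ i + (g i - v i - b i) * min (x i) (ξ₂ i))| :=
        hsplit ▸ abs_sum_le_sum_abs _ _
    _ ≤ ∑ i, b i * |ξ₁ i - ξ₂ i| := sum_le_sum fun i _ => abs_mul_add_mul_min_sub_le (hvgb i)
    _ ≤ enorm2 b * enorm2 (fun i => ξ₁ i - ξ₂ i) := by
      simpa only [sq_abs, enorm2] using
        Real.sum_mul_le_sqrt_mul_sqrt univ b fun i => |ξ₁ i - ξ₂ i|

theorem newsvendorCost_le_add (hvgb : ∀ i, |v i - g i| ≤ b i) (x ξ h : Fin d → ℝ) :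
    newsvendorCost c v g b x ξ + ∑ i, b i * h i - ∑ i, (v i - g i + b i) * max (x i - ξ i) 0 ≤
      newsvendorCost c v g b x (ξ + h) := by
  have hterm : ∀ i, -((v i - g i + b i) * max (x i - ξ i) 0) ≤
      (g i - v i - b i) * (min (x i) (ξ i + h i) - min (x i) (ξ i)) := fun i => by
    have := (abs_le.1 (hvgb i)).1
    nlinarith [min_add_sub_min_le (x i) (ξ i) (h i)]
  have hsum := sum_le_sum fun i (_ : i ∈ univ) => hterm i
  rw [sum_neg_distrib] at hsum
  have hexpand : newsvendorCost c v g b x (ξ + h) = newsvendorCost c v g b x ξ + ∑ i, b i * h i +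
      ∑ i, (g i - v i - b i) * (min (x i) (ξ i + h i) - min (x i) (ξ i)) := by
    simp only [newsvendorCost, Pi.add_apply, mul_add, mul_sub, sum_add_distrib, sum_sub_distrib]
    ring
  linarith

theorem exists_integral_newsvendorCost_ge (hn : 0 < n) (hvgb : ∀ i, |v i - g i| ≤ b i)
    (hξhat : ∀ j i, 0 ≤ ξhat j i) {ε T : ℝ} (hε : 0 ≤ ε) (hεT : ε < T) (x : Fin d → ℝ) :
    ∃ Q : Measure (Fin d → ℝ), IsProbabilityMeasure Q ∧ Q {ξ | ∀ i, 0 ≤ ξ i}ᶜ = 0 ∧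
      Wcost (fun a b => enorm2 (fun i => a i - b i)) Q (empMeasure ξhat) ≤ ENNReal.ofReal ε ∧
      (∑ j, newsvendorCost c v g b x (ξhat j)) / n + ε * enorm2 b -
          ε / T * ((∑ j, ∑ i, (v i - g i + b i) * max (x i - ξhat j i) 0) / n) ≤
        ∫ ξ, newsvendorCost c v g b x ξ ∂Q := by
  have hP := isProbabilityMeasure_empMeasure ξhat hn
  have hT : 0 < T := hε.trans_lt hεT
  set δ := ε / T
  have hδ₀ : 0 ≤ δ := by positivity
  have hδ₁ : δ ≤ 1 := div_le_one_of_le₀ hεT.le hT.le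
  have hδT : δ * T = ε := div_mul_cancel₀ ε hT.ne'
  set h := (T / enorm2 b) • b
  have hmap := map_empMeasure ξhat (measurable_add_const h)
  have hS : MeasurableSet {ξ : Fin d → ℝ | ∀ i, 0 ≤ ξ i} := measurableSet_Ici (a := 0)
  refine ⟨ENNReal.ofReal (1 - δ) • empMeasure ξhat +
    ENNReal.ofReal δ • (empMeasure ξhat).map (· + h), ⟨?_⟩, ?_, ?_, ?_⟩
  · simp [Measure.map_apply (measurable_add_const h) MeasurableSet.univ,
      ← ENNReal.ofReal_add (sub_nonneg.2 hδ₁) hδ₀]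
  · have hshift : ∀ j i, 0 ≤ ξhat j i + h i := fun j i =>
      add_nonneg (hξhat j i) (smul_nonneg (div_nonneg hT.le (enorm2_nonneg b))
        ((abs_nonneg _).trans (hvgb i)))
    simp [hmap, empMeasure_compl_eq_zero _ hS hξhat,
      empMeasure_compl_eq_zero ((· + h) ∘ ξhat) hS hshift]
  · refine (Wcost_smul_add_smul_map_add_le _ hδ₀ hδ₁ h).trans (ENNReal.ofReal_le_ofReal ?_)
    calc δ * enorm2 h ≤ δ * T := by gcongr; exact enorm2_div_enorm2_smul_self_le b hT.le
      _ = ε := hδT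
  · have hbh : ∑ i, b i * h i = T * enorm2 b := sum_mul_div_enorm2_smul_self b T
    have hpoint : ∀ j, newsvendorCost c v g b x (ξhat j) + T * enorm2 b -
        ∑ i, (v i - g i + b i) * max (x i - ξhat j i) 0 ≤
          newsvendorCost c v g b x (((· + h) ∘ ξhat) j) := fun j => by
      rw [← hbh]
      exact newsvendorCost_le_add hvgb x (ξhat j) h
    have havg := div_le_div_of_nonneg_right (sum_le_sum fun j (_ : j ∈ univ) => hpoint j)
      (Nat.cast_nonneg n)
    rw [sum_sub_distrib, sum_add_distrib, sum_const, card_univ, Fintype.card_fin, nsmul_eq_mul,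
      sub_div, add_div, mul_div_cancel_left₀ _ (Nat.cast_ne_zero.2 hn.ne')] at havg
    rw [hmap, integral_ofReal_smul_add_ofReal_smul (integrable_empMeasure _ _)
      (integrable_empMeasure _ _) (sub_nonneg.2 hδ₁) hδ₀, integral_empMeasure,
      integral_empMeasure]
    linear_combination δ * havg - enorm2 b * hδT

theorem droObj_newsvendorCost (hn : 0 < n) (hvgb : ∀ i, |v i - g i| ≤ b i)
    (hξhat : ∀ j i, 0 ≤ ξhat j i) {ε : ℝ} (hε : 0 ≤ ε) (x : Fin d → ℝ) :
    droObj (newsvendorCost c v g b) ξhat ε x =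
      (∑ j, newsvendorCost c v g b x (ξhat j)) / n + ε * enorm2 b := by
  set M := (∑ j, newsvendorCost c v g b x (ξhat j)) / n
  set C := (∑ j, ∑ i, (v i - g i + b i) * max (x i - ξhat j i) 0) / n
  have hlim : Tendsto (fun T => M + ε * enorm2 b - ε / T * C) atTop (𝓝 (M + ε * enorm2 b)) := by
    simpa using tendsto_const_nhds.sub
      ((tendsto_const_nhds.div_atTop tendsto_id).mul_const C)
  apply csSup_eq_of_forall_le_of_forall_lt_exists_gt
  · obtain ⟨Q, hQ, hS, hW, -⟩ :=
      exists_integral_newsvendorCost_ge (c := c) hn hvgb hξhat hε (lt_add_one ε) x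
    exact ⟨_, Q, hQ, hS, hW, rfl⟩
  · rintro r ⟨Q, -, -, hW, rfl⟩
    rw [← show ∫ ξ, newsvendorCost c v g b x ξ ∂empMeasure ξhat = M from integral_empMeasure _ _,
      mul_comm ε]
    exact integral_le_integral_add_mul_of_Wcost_le (enorm2_nonneg b) hε
      continuous_enorm2_sub.measurable (fun _ _ => enorm2_nonneg _)
      (continuous_newsvendorCost x).measurable (integrable_empMeasure _ _) (abs_newsvendorCost_sub_le hvgb x) hW
  · intro w hw
    obtain ⟨T, hwT, hεT⟩ :=
      ((hlim.eventually (lt_mem_nhds hw)).and (eventually_gt_atTop ε)).exists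
    obtain ⟨Q, hQ, hS, hW, hge⟩ :=
      exists_integral_newsvendorCost_ge (c := c) hn hvgb hξhat hε hεT x
    exact ⟨_, ⟨Q, hQ, hS, hW, rfl⟩, hwT.trans_le hge⟩

end Newsvendor

/-- The newsvendor cost is `‖b‖₂`-Lipschitz in `ξ` on `ℝ₊ᵈ`; consequently the 1-Wasserstein
DRO objective equals the SAA objective plus the constant `ε‖b‖₂`, and 1-WDRO has the same
minimizers over `𝒳 = {x : 0 ≤ x ≤ a}` as SAA. -/
theorem newsvendor_1WDRO_eq_SAA {d n : ℕ} (hn : 0 < n)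
    (c v g b a : Fin d → ℝ)
    (hvg : ∀ i, g i < v i) (hb : ∀ i, 0 ≤ b i) (hbvg : ∀ i, v i - g i ≤ b i)
    (F : (Fin d → ℝ) → (Fin d → ℝ) → ℝ)
    (hF : ∀ x ξ, F x ξ = (∑ i, (c i - g i) * x i) + (∑ i, b i * ξ i) +
        ∑ i, (g i - v i - b i) * min (x i) (ξ i))
    (ξhat : Fin n → (Fin d → ℝ)) (hξhat : ∀ j i, 0 ≤ ξhat j i)
    (ε : ℝ) (hε : 0 < ε) :
    (∀ x ξ₁ ξ₂ : Fin d → ℝ, (∀ i, 0 ≤ ξ₁ i) → (∀ i, 0 ≤ ξ₂ i) →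
        |F x ξ₁ - F x ξ₂| ≤ enorm2 b * enorm2 (fun i => ξ₁ i - ξ₂ i)) ∧
    (∀ x : Fin d → ℝ,
        droObj F ξhat ε x = (∑ j, F x (ξhat j)) / n + ε * enorm2 b) ∧
    (∀ xstar : Fin d → ℝ, (∀ i, 0 ≤ xstar i ∧ xstar i ≤ a i) →
      ((∀ x : Fin d → ℝ, (∀ i, 0 ≤ x i ∧ x i ≤ a i) →
          droObj F ξhat ε xstar ≤ droObj F ξhat ε x) ↔
       (∀ x : Fin d → ℝ, (∀ i, 0 ≤ x i ∧ x i ≤ a i) →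
          (∑ j, F xstar (ξhat j)) / n ≤ (∑ j, F x (ξhat j)) / n))) := by
  have hvgb : ∀ i, |v i - g i| ≤ b i := fun i => abs_le.2 ⟨by linarith [hb i, hvg i], hbvg i⟩
  obtain rfl : F = newsvendorCost c v g b := funext₂ hF
  have hdro := droObj_newsvendorCost (c := c) hn hvgb hξhat hε.le
  refine ⟨fun x ξ₁ ξ₂ _ _ => abs_newsvendorCost_sub_le hvgb x ξ₁ ξ₂, hdro, fun xstar _ => ?_⟩
  simp only [hdro, add_le_add_iff_right]
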